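/- arXiv:2402.02770 — 3 statements merged into one kernel-verified Lean document; each statement's English description precedes it below -/
import Mathlib

section
/- Let A be the 4×4 matrix with rows (−δ/(cμ), 0, 1/c, 0), (a/(cμ), −R_s/(cμ), 0, 0), (0, 0, 0, 1), (0, −kαβλ/(μD_v), δ_v/(μD_v), c/D_v), all parameters positive. If δ > (1+c)μ, R_s − a > cμ, and c > D_v + δ_v/μ + kαβλ/μ, then the Geršgorin discs of rows 1 and 2 are disjoint from the Geršgorin discs of rows 3 and 4, and the discs of rows 3 and 4 are disjoint from each other. -/
open Metric Finset

lemma disjoint_closedBall_ofReal {x y r s : ℝ} (h : x + r < y - s) :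
    Disjoint (closedBall (x : ℂ) r) (closedBall (y : ℂ) s) :=
  closedBall_disjoint_closedBall <| by
    rw [Complex.isometry_ofReal.dist_eq, Real.dist_eq, abs_sub_comm]
    linarith [le_abs_self (y - x)]

theorem gershgorin_discs_disjoint_general (a k lam α β μ δ δv Dv c Rs : ℝ)
    (ha : 0 < a) (hk : 0 < k) (hlam : 0 < lam) (hα : 0 < α) (hβ : 0 < β)
    (hμ : 0 < μ) (hδv : 0 < δv) (hDv : 0 < Dv) (hc : 0 < c)
    (h1 : δ > (1 + c) * μ) (h2 : Rs - a > c * μ)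
    (h3 : c > Dv + δv / μ + k * α * β * lam / μ) :
    let A : Matrix (Fin 4) (Fin 4) ℝ :=
      !![-δ / (c * μ), 0, 1 / c, 0;
         a / (c * μ), -Rs / (c * μ), 0, 0;
         0, 0, 0, 1;
         0, -(k * α * β * lam) / (μ * Dv), δv / (μ * Dv), c / Dv]
    let G : Fin 4 → Set ℂ := fun i =>
      {z : ℂ | ‖z - (A i i : ℝ)‖ ≤
        ∑ j ∈ Finset.univ.erase i, |A i j|}
    Disjoint (G 0) (G 2) ∧ Disjoint (G 0) (G 3) ∧
    Disjoint (G 1) (G 2) ∧ Disjoint (G 1) (G 3) ∧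
    Disjoint (G 2) (G 3) := by
  intro A G
  set R : Fin 4 → ℝ := fun i => ∑ j ∈ univ.erase i, |A i j|
  have hG (i : Fin 4) : G i = closedBall ((A i i : ℝ) : ℂ) (R i) := by
    ext z; simp [G, R, dist_eq_norm]
  have hR (i : Fin 4) : R i = ∑ j, |A i j| - |A i i| := sum_erase_eq_sub (mem_univ i)
  obtain ⟨diag0, diag1, diag2, diag3⟩ : A 0 0 = -δ / (c * μ) ∧ A 1 1 = -Rs / (c * μ) ∧
      A 2 2 = 0 ∧ A 3 3 = c / Dv := ⟨rfl, rfl, rfl, rfl⟩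
  obtain ⟨radius0, radius1, radius2, radius3⟩ : R 0 = |1 / c| ∧ R 1 = |a / (c * μ)| ∧ R 2 = 1 ∧
      R 3 = |-(k * α * β * lam) / (μ * Dv)| + |δv / (μ * Dv)| := by
    simp [hR, A, Fin.sum_univ_four]
  have hcμ : 0 < c * μ := mul_pos hc hμ
  have hμDv : 0 < μ * Dv := mul_pos hμ hDv
  -- The discs of rows 1 and 2 lie left of Re z = -1, that of row 4 right of Re z = 1,
  -- and that of row 3 is the unit disc.
  have right0 : -δ / (c * μ) + |1 / c| < -1 := by
    rw [abs_of_pos (one_div_pos.2 hc), show 1 / c = μ / (c * μ) by field_simp, ← add_div,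
      div_lt_iff₀ hcμ]
    linarith
  have right1 : -Rs / (c * μ) + |a / (c * μ)| < -1 := by
    rw [abs_of_pos (div_pos ha hcμ), ← add_div, div_lt_iff₀ hcμ]
    linarith
  have left3 : 1 < c / Dv - (|-(k * α * β * lam) / (μ * Dv)| + |δv / (μ * Dv)|) := by
    rw [neg_div, abs_neg, abs_of_pos (by positivity), abs_of_pos (div_pos hδv hμDv), ← div_div,
      ← div_div, ← add_div, ← sub_div, lt_div_iff₀ hDv]
    linarith
  simp only [hG, diag0, diag1, diag2, diag3, radius0, radius1, radius2, radius3]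
  refine ⟨?_, ?_, ?_, ?_, ?_⟩ <;> apply disjoint_closedBall_ofReal <;> linarith

theorem gershgorin_discs_disjoint (a k lam α β μ δ δv Dv c Rs : ℝ)
    (ha : 0 < a) (hk : 0 < k) (hlam : 0 < lam) (hα : 0 < α) (hβ : 0 < β)
    (hμ : 0 < μ) (hδ : 0 < δ) (hδv : 0 < δv) (hDv : 0 < Dv) (hc : 0 < c)
    (hRs : 0 < Rs)
    (h1 : δ > (1 + c) * μ) (h2 : Rs - a > c * μ)
    (h3 : c > Dv + δv / μ + k * α * β * lam / μ) :
    let A : Matrix (Fin 4) (Fin 4) ℝ :=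
      !![-δ / (c * μ), 0, 1 / c, 0;
         a / (c * μ), -Rs / (c * μ), 0, 0;
         0, 0, 0, 1;
         0, -(k * α * β * lam) / (μ * Dv), δv / (μ * Dv), c / Dv]
    let G : Fin 4 → Set ℂ := fun i =>
      {z : ℂ | ‖z - (A i i : ℝ)‖ ≤
        ∑ j ∈ Finset.univ.erase i, |A i j|}
    Disjoint (G 0) (G 2) ∧ Disjoint (G 0) (G 3) ∧
    Disjoint (G 1) (G 2) ∧ Disjoint (G 1) (G 3) ∧
    Disjoint (G 2) (G 3) :=
  gershgorin_discs_disjoint_general a k lam α β μ δ δv Dv c Rs ha hk hlam hα hβ hμ hδv hDv hc h1 h2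
    h3
end

section
/- Let A be an n×n real matrix and suppose one Geršgorin disc G_k of A is disjoint from all the other discs. Then A has exactly one eigenvalue (counted with algebraic multiplicity) in G_k, and this eigenvalue is real. -/
/-!
Scaling the off-diagonal entries of `A` by `t ∈ [0, 1]` only shrinks its Geršgorin discs, so
all eigenvalues of `A(t)` stay in the discs of `A`. A circle around `a_kk` slightly larger than
the isolated disc therefore never passes through an eigenvalue, and by the argument principle
the number of eigenvalues inside it is a continuous integer-valued, hence constant, function of
`t`. At `t = 0` the eigenvalues are the diagonal entries, and only `a_kk` lies in that disc.
For real `A` the disc is symmetric about the real axis and non-real eigenvalues come in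
conjugate pairs, so the single eigenvalue in it is real.
-/

open scoped Classical

open Polynomial Metric Complex Real Finset Topology ComplexConjugate

theorem circleIntegral.integral_sub_inv_of_notMem_sphere {c a : ℂ} {R : ℝ} (hR : 0 < R)
    (ha : a ∉ sphere c R) :
    (∮ z in C(c, R), (z - a)⁻¹) = if a ∈ ball c R then 2 * π * I else 0 := by
  split_ifs with hab
  · exact circleIntegral.integral_sub_inv_of_mem_ball hab
  · have ha' : a ∉ closedBall c R := by
      rw [← ball_union_sphere]
      exact fun h => h.elim hab ha
    refine DiffContOnCl.circleIntegral_eq_zero hR.le ?_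
    refine ((differentiable_id.sub_const a).diffContOnCl).inv fun z hz => sub_ne_zero.2 ?_
    rw [closure_ball c hR.ne'] at hz
    exact ne_of_mem_of_not_mem hz ha'

theorem Polynomial.circleIntegral_derivative_div_prod_X_sub_C (s : Multiset ℂ) {c : ℂ} {R : ℝ}
    (hR : 0 < R) (hs : ∀ r ∈ s, r ∉ sphere c R) :
    (∮ z in C(c, R), ((s.map fun r => X - C r).prod.derivative.eval z /
        (s.map fun r => X - C r).prod.eval z)) =
      2 * π * I * (s.filter (· ∈ ball c R)).card := by
  induction s using Multiset.induction_on with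
  | empty => simp [circleIntegral]
  | cons a s ih =>
    have has : a ∉ sphere c R := hs a (Multiset.mem_cons_self a s)
    have hs' : ∀ r ∈ s, r ∉ sphere c R := fun r hr => hs r (Multiset.mem_cons_of_mem hr)
    set q := (s.map fun r => X - C r).prod
    have hq : ∀ z ∈ sphere c R, q.eval z ≠ 0 := by
      intro z hz
      simp only [q, eval_multiset_prod, Multiset.map_map, Function.comp_def, eval_sub, eval_X,
        eval_C, ne_eq, Multiset.prod_eq_zero_iff, Multiset.mem_map, sub_eq_zero, not_exists,
        not_and]
      exact fun r hr hzr => hs' r hr (hzr ▸ hz)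
    have hlogDeriv : Set.EqOn (fun z => ((X - C a) * q).derivative.eval z / ((X - C a) * q).eval z)
        (fun z => (z - a)⁻¹ + q.derivative.eval z / q.eval z) (sphere c R) := by
      intro z hz
      have hza : z - a ≠ 0 := sub_ne_zero.2 (ne_of_mem_of_not_mem hz has)
      simp only [derivative_mul, derivative_sub, derivative_X, derivative_C, sub_zero, one_mul,
        eval_add, eval_mul, eval_sub, eval_X, eval_C]
      field_simp [hza, hq z hz]
    have hint_inv : CircleIntegrable (fun z => (z - a)⁻¹) c R :=
      circleIntegrable_sub_inv_iff.2 (Or.inr (by rwa [abs_of_pos hR]))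
    have hint_q : CircleIntegrable (fun z => q.derivative.eval z / q.eval z) c R :=
      ContinuousOn.circleIntegrable hR.le <|
        q.derivative.continuousOn.div q.continuousOn hq
    simp only [Multiset.map_cons, Multiset.prod_cons]
    rw [circleIntegral.integral_congr hR.le hlogDeriv, circleIntegral.integral_add hint_inv hint_q,
      ih hs', circleIntegral.integral_sub_inv_of_notMem_sphere hR has, Multiset.filter_cons]
    split_ifs
    · simp only [Multiset.singleton_add, Multiset.card_cons, Nat.cast_add, Nat.cast_one]
      ring
    · simp only [zero_add]

theorem Polynomial.circleIntegral_derivative_div_eq_card_roots (p : ℂ[X]) {c : ℂ} {R : ℝ}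
    (hR : 0 < R) (hp : ∀ z ∈ sphere c R, p.eval z ≠ 0) :
    (∮ z in C(c, R), p.derivative.eval z / p.eval z) =
      2 * π * I * (p.roots.filter (· ∈ ball c R)).card := by
  have hp0 : p ≠ 0 := by
    rintro rfl
    exact hp _ (circleMap_mem_sphere c hR.le 0) eval_zero
  set q := (p.roots.map fun r => X - C r).prod
  have hpq : C p.leadingCoeff * q = p :=
    C_leadingCoeff_mul_prod_multiset_X_sub_C IsAlgClosed.card_roots_eq_natDegree
  have hroots : ∀ r ∈ p.roots, r ∉ sphere c R := fun r hr hrs =>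
    hp r hrs (isRoot_of_mem_roots hr)
  rw [← circleIntegral_derivative_div_prod_X_sub_C p.roots hR hroots]
  refine circleIntegral.integral_congr hR.le fun z _ => ?_
  conv_lhs => rw [← hpq]
  simp only [derivative_C_mul, eval_mul, eval_C]
  exact mul_div_mul_left _ _ (leadingCoeff_ne_zero.2 hp0)

theorem Polynomial.continuous_eval_of_continuous_coeff {T R : Type*} [TopologicalSpace T]
    [Semiring R] [TopologicalSpace R] [IsTopologicalSemiring R] {p : T → R[X]} {d : ℕ}
    (hdeg : ∀ t, (p t).natDegree ≤ d) (hcoeff : ∀ i, Continuous fun t => (p t).coeff i) :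
    Continuous fun x : T × R => (p x.1).eval x.2 := by
  simp_rw [fun x : T × R => eval_eq_sum_range' (Nat.lt_succ_of_le (hdeg x.1)) x.2]
  exact continuous_finsetSum _ fun i _ =>
    ((hcoeff i).comp continuous_fst).mul (continuous_snd.pow i)

theorem Polynomial.card_roots_filter_mem_ball_eq {T : Type*} [TopologicalSpace T]
    [PreconnectedSpace T] {p : T → ℂ[X]} {d : ℕ} (hdeg : ∀ t, (p t).natDegree ≤ d)
    (hcoeff : ∀ i, Continuous fun t => (p t).coeff i) {c : ℂ} {R : ℝ} (hR : 0 < R)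
    (hp : ∀ t, ∀ z ∈ sphere c R, (p t).eval z ≠ 0) (t₁ t₂ : T) :
    ((p t₁).roots.filter (· ∈ ball c R)).card =
      ((p t₂).roots.filter (· ∈ ball c R)).card := by
  have hval : Continuous fun x : T × ℂ => (p x.1).eval x.2 :=
    continuous_eval_of_continuous_coeff hdeg hcoeff
  have hder : Continuous fun x : T × ℂ => (p x.1).derivative.eval x.2 :=
    continuous_eval_of_continuous_coeff (fun t => (natDegree_derivative_le _).trans
      (Nat.sub_le _ _ |>.trans (hdeg t))) fun i => by
        simp_rw [coeff_derivative]; exact (hcoeff (i + 1)).mul continuous_const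
  have hint : Continuous fun t => ∮ z in C(c, R), (p t).derivative.eval z / (p t).eval z := by
    refine intervalIntegral.continuous_parametric_intervalIntegral_of_continuous' ?_ _ _
    have hcm : Continuous fun x : T × ℝ => (x.1, circleMap c R x.2) := by fun_prop
    simp_rw [deriv_circleMap]
    refine (((continuous_circleMap 0 R).comp continuous_snd).mul continuous_const).smul ?_
    exact (hder.comp hcm).div (hval.comp hcm) fun x =>
      hp x.1 _ (circleMap_mem_sphere c hR.le x.2)
  have hcast : IsEmbedding ((↑) : ℕ → ℂ) := by
    have := isometry_ofReal.isEmbedding.comp Nat.isClosedEmbedding_coe_real.isEmbedding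
    convert this using 1
    ext n; simp
  have hcount : Continuous fun t => ((p t).roots.filter (· ∈ ball c R)).card := by
    rw [hcast.continuous_iff]
    convert hint.div_const (2 * π * I) using 1
    funext t
    rw [Function.comp_apply, circleIntegral_derivative_div_eq_card_roots _ hR (hp t)]
    field_simp [two_pi_I_ne_zero]
  exact PreconnectedSpace.constant ‹_› hcount

theorem exists_gt_forall_disjoint_closedBall {ι E : Type*} [Finite ι] [NormedAddCommGroup E]
    [NormedSpace ℝ E] {x : ι → E} {r : ι → ℝ} (hr : ∀ i, 0 ≤ r i) {k : ι}
    (h : ∀ j ≠ k, Disjoint (closedBall (x k) (r k)) (closedBall (x j) (r j))) :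
    ∃ ρ, r k < ρ ∧ ∀ j ≠ k, Disjoint (closedBall (x k) ρ) (closedBall (x j) (r j)) := by
  have hgap : ∀ j ≠ k, r k < dist (x k) (x j) - r j := fun j hj => by
    linarith [(disjoint_closedBall_closedBall_iff (hr k) (hr j)).1 (h j hj)]
  have hev : ∀ᶠ ρ in 𝓝[>] (r k), ∀ j, j ≠ k → ρ < dist (x k) (x j) - r j :=
    Filter.eventually_all.2 fun j => by
      by_cases hj : j = k
      · exact Filter.Eventually.of_forall fun _ hne => absurd hj hne
      · exact ((eventually_lt_nhds (hgap j hj)).filter_mono nhdsWithin_le_nhds).mono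
          fun _ hρ _ => hρ
  obtain ⟨ρ, hρ, hρk⟩ := (hev.and self_mem_nhdsWithin).exists
  exact ⟨ρ, hρk, fun j hj => closedBall_disjoint_closedBall (by linarith [hρ j hj])⟩

namespace Matrix

variable {n R K : Type*} [DecidableEq n]

def scaleOffDiag [Semiring R] (A : Matrix n n R) (t : R) : Matrix n n R :=
  of fun i j => if i = j then A i i else t * A i j

@[simp]
theorem scaleOffDiag_one [Semiring R] (A : Matrix n n R) : A.scaleOffDiag 1 = A := by
  ext i j
  by_cases h : i = j <;> simp [scaleOffDiag, h]

@[simp]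
theorem scaleOffDiag_zero [Semiring R] (A : Matrix n n R) :
    A.scaleOffDiag 0 = diagonal A.diag := by
  ext i j
  by_cases h : i = j <;> simp [scaleOffDiag, diagonal, h]

theorem continuous_scaleOffDiag [Semiring R] [TopologicalSpace R] [IsTopologicalSemiring R]
    (A : Matrix n n R) : Continuous A.scaleOffDiag :=
  continuous_pi fun i => continuous_pi fun j => by
    by_cases h : i = j <;> simp only [scaleOffDiag, of_apply, h, if_true, if_false] <;> fun_prop

variable [Fintype n]

def gershgorinDisc [NormedField K] (A : Matrix n n K) (i : n) : Set K :=
  closedBall (A i i) (∑ j ∈ univ.erase i, ‖A i j‖)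

theorem diag_mem_gershgorinDisc [NormedField K] (A : Matrix n n K) (i : n) :
    A i i ∈ A.gershgorinDisc i :=
  mem_closedBall_self (sum_nonneg fun _ _ => norm_nonneg _)

theorem exists_mem_gershgorinDisc_of_isRoot_charpoly [NormedField K] {A : Matrix n n K} {μ : K}
    (h : A.charpoly.IsRoot μ) : ∃ i, μ ∈ A.gershgorinDisc i :=
  eigenvalue_mem_ball <|
    (Module.End.hasEigenvalue_iff_isRoot_charpoly _ _).2 (by rwa [charpoly_toLin'])

theorem gershgorinDisc_scaleOffDiag_subset [NormedField K] (A : Matrix n n K) {t : K}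
    (ht : ‖t‖ ≤ 1) (i : n) : (A.scaleOffDiag t).gershgorinDisc i ⊆ A.gershgorinDisc i := by
  simp only [gershgorinDisc, scaleOffDiag, of_apply, if_true]
  refine closedBall_subset_closedBall <| sum_le_sum fun j hj => ?_
  rw [if_neg (ne_of_mem_erase hj).symm, norm_mul]
  exact mul_le_of_le_one_left (norm_nonneg _) ht

theorem continuous_charpoly_coeff [CommRing R] [TopologicalSpace R] [IsTopologicalRing R]
    (k : ℕ) : Continuous fun M : Matrix n n R => M.charpoly.coeff k := by
  have h : ∀ M : Matrix n n R, M.charpoly.coeff k =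
      MvPolynomial.eval (fun p : n × n => M p.1 p.2) ((charpoly.univ R n).coeff k) := by
    intro M
    have hM : of (Function.curry fun p : n × n => M p.1 p.2) = M := rfl
    conv_lhs => rw [← hM, ← charpoly.univ_coeff_eval₂Hom n (RingHom.id R)]
    rfl
  simp_rw [h]
  exact (MvPolynomial.continuous_eval _).comp (continuous_pi fun p => by fun_prop)

theorem roots_charpoly_diagonal [CommRing R] [IsDomain R] (d : n → R) :
    (diagonal d).charpoly.roots = univ.val.map d := by
  rw [charpoly_diagonal, prod_eq_multiset_prod, ← roots_multiset_prod_X_sub_C (univ.val.map d),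
    Multiset.map_map]
  rfl

theorem card_filter_mem_gershgorinDisc_diag [NormedField K] (A : Matrix n n K) (k : n)
    (hdisj : ∀ j ≠ k, Disjoint (A.gershgorinDisc k) (A.gershgorinDisc j)) :
    ((univ.val.map A.diag).filter (· ∈ A.gershgorinDisc k)).card = 1 := by
  have hk : ∀ i, A i i ∈ A.gershgorinDisc k ↔ i = k := fun i =>
    ⟨fun hi => by_contra fun hik =>
      Set.disjoint_left.1 (hdisj i hik) hi (A.diag_mem_gershgorinDisc i),
     fun hik => hik ▸ A.diag_mem_gershgorinDisc i⟩
  rw [Multiset.filter_map, Multiset.card_map, ← Finset.filter_val, Finset.card_val,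
    Finset.card_eq_one]
  exact ⟨k, by ext i; simp [hk]⟩

theorem card_roots_charpoly_filter_mem_gershgorinDisc (A : Matrix n n ℂ) (k : n)
    (hdisj : ∀ j ≠ k, Disjoint (A.gershgorinDisc k) (A.gershgorinDisc j)) :
    (A.charpoly.roots.filter (· ∈ A.gershgorinDisc k)).card = 1 := by
  obtain ⟨ρ, hρ, hρdisj⟩ := exists_gt_forall_disjoint_closedBall (x := fun i => A i i)
    (fun i => sum_nonneg fun j _ => norm_nonneg (A i j)) hdisj
  have hρ0 : 0 < ρ := (sum_nonneg fun j _ => norm_nonneg (A k j)).trans_lt hρ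
  set p : unitInterval → ℂ[X] := fun t => (A.scaleOffDiag (t : ℂ)).charpoly
  have hroot : ∀ t z, (p t).IsRoot z →
      (z ∈ ball (A k k) ρ ↔ z ∈ A.gershgorinDisc k) ∧ z ∉ sphere (A k k) ρ := by
    intro t z hz
    obtain ⟨i, hi⟩ := exists_mem_gershgorinDisc_of_isRoot_charpoly hz
    have ht : ‖(t : ℂ)‖ ≤ 1 := by
      rw [norm_real, Real.norm_of_nonneg t.2.1]; exact t.2.2
    replace hi := A.gershgorinDisc_scaleOffDiag_subset ht i hi
    by_cases hik : i = k
    · subst hik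
      have hzρ : dist z (A i i) < ρ := lt_of_le_of_lt hi hρ
      exact ⟨iff_of_true hzρ hi, fun h => hzρ.ne (mem_sphere.1 h)⟩
    · have hzρ : ρ < dist z (A k k) := by
        simpa using Set.disjoint_right.1 (hρdisj i hik) hi
      have hzk : z ∉ A.gershgorinDisc k := Set.disjoint_right.1 (hdisj i hik) hi
      exact ⟨iff_of_false (fun h => (mem_ball.1 h).not_gt hzρ) hzk,
        fun h => hzρ.ne' (mem_sphere.1 h)⟩
  have hball : ∀ t, (p t).roots.filter (· ∈ ball (A k k) ρ) =
      (p t).roots.filter (· ∈ A.gershgorinDisc k) := fun t =>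
    Multiset.filter_congr fun z hz => (hroot t z (isRoot_of_mem_roots hz)).1
  have hconst := card_roots_filter_mem_ball_eq (p := p)
    (fun t => (charpoly_natDegree_eq_dim _).le)
    (fun i => (continuous_charpoly_coeff i).comp <|
      A.continuous_scaleOffDiag.comp (continuous_ofReal.comp continuous_subtype_val))
    hρ0 (fun t z hz h0 => (hroot t z h0).2 hz) 1 0
  rw [hball, hball] at hconst
  simp only [p, Set.Icc.coe_one, Set.Icc.coe_zero, ofReal_one, ofReal_zero,
    scaleOffDiag_one, scaleOffDiag_zero, roots_charpoly_diagonal] at hconst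
  rw [hconst]
  exact A.card_filter_mem_gershgorinDisc_diag k hdisj

theorem conj_mem_gershgorinDisc_map_ofReal (A : Matrix n n ℝ) {i : n} {z : ℂ}
    (hz : z ∈ (A.map ofReal).gershgorinDisc i) :
    conj z ∈ (A.map ofReal).gershgorinDisc i := by
  rw [gershgorinDisc, mem_closedBall, map_apply, ← conj_ofReal, dist_conj_conj]
  exact hz

end Matrix

theorem Polynomial.conj_mem_aroots {q : ℝ[X]} {z : ℂ} (hz : z ∈ q.aroots ℂ) :
    conj z ∈ q.aroots ℂ := by
  rw [mem_aroots] at hz ⊢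
  exact ⟨hz.1, by rw [← conjAe_coe, aeval_algHom_apply, hz.2, map_zero]⟩

theorem Polynomial.im_eq_zero_of_card_aroots_filter_eq_one {q : ℝ[X]} {S : Set ℂ}
    (hS : ∀ z ∈ S, conj z ∈ S) (h : ((q.aroots ℂ).filter (· ∈ S)).card = 1) {z : ℂ}
    (hz : z ∈ q.aroots ℂ) (hzS : z ∈ S) : z.im = 0 := by
  obtain ⟨w, hw⟩ := Multiset.card_eq_one.1 h
  have hz' : z ∈ (q.aroots ℂ).filter (· ∈ S) := Multiset.mem_filter.2 ⟨hz, hzS⟩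
  have hconj : conj z ∈ (q.aroots ℂ).filter (· ∈ S) :=
    Multiset.mem_filter.2 ⟨conj_mem_aroots hz, hS z hzS⟩
  rw [hw, Multiset.mem_singleton] at hz' hconj
  exact conj_eq_iff_im.1 (hconj.trans hz'.symm)

theorem isolated_gershgorin_disc_real_eigenvalue (n : ℕ)
    (A : Matrix (Fin n) (Fin n) ℝ) (k : Fin n)
    (G : Fin n → Set ℂ)
    (hG : ∀ i, G i = {z : ℂ | ‖z - (A i i : ℝ)‖ ≤
      ∑ j ∈ Finset.univ.erase i, |A i j|})
    (hdisj : ∀ j, j ≠ k → Disjoint (G k) (G j)) :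
    (((A.map (Complex.ofReal)).charpoly.roots.filter (fun z => z ∈ G k)).card = 1) ∧
    (∀ z ∈ (A.map (Complex.ofReal)).charpoly.roots, z ∈ G k → z.im = 0) := by
  obtain rfl : G = (A.map ofReal).gershgorinDisc := by
    funext i
    rw [hG]
    ext z
    simp [Matrix.gershgorinDisc, dist_eq_norm]
  have hcard := (A.map ofReal).card_roots_charpoly_filter_mem_gershgorinDisc k hdisj
  have hroots : (A.map ofReal).charpoly.roots = A.charpoly.aroots ℂ := by
    rw [aroots, ← Matrix.charpoly_map]
    rfl
  refine ⟨hcard, fun z hz hzk => ?_⟩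
  rw [hroots] at hcard hz
  exact im_eq_zero_of_card_aroots_filter_eq_one
    (fun _ => A.conj_mem_gershgorinDisc_map_ofReal) hcard hz hzk
end

section
/- Under the conditions δ > (1+c)μ, R_s − a > cμ, and c > D_v + δ_v/μ + kαβλ/μ (all parameters positive), the 4×4 matrix A with rows (−δ/(cμ), 0, 1/c, 0), (a/(cμ), −R_s/(cμ), 0, 0), (0, 0, 0, 1), (0, −kαβλ/(μD_v), δ_v/(μD_v), c/D_v) has at least one real eigenvalue λ > 1 (in particular a positive real eigenvalue), and no eigenvalue with positive real part lies outside the half-plane {Re z > 1} except possibly one real eigenvalue in the disc centered at 0 of radius 1. -/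
/-!
The characteristic polynomial of `A` is `(z + d) (z + r) (z² - C z - D) + E` with
`d = δ/(cμ)`, `r = R_s/(cμ)`, `C = c/D_v`, `D = δ_v/(μ D_v)` and `E ≤ d r K`, where
`K = kαβλ/(μ D_v)` and `C > 1 + D + K`. Its value at `1` is negative and its value at `C + 1`
positive, whence a real root `t > 1`. For a non-real root `z = x + iy` with `0 < x ≤ 1`, write
`q = z² - C z - D`; multiplying `(z + d)(z + r) q = -E` by `conj q` and comparing imaginary parts
gives `(2x + d + r)|q|² = E (2x - C)`, so `C < 2x`. Then `|q| ≥ -Re q ≥ D + C - 1 > K`, and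
`|z + d| |z + r| |q| > d r K ≥ E` contradicts `|(z + d)(z + r) q| = E`.
-/

open Complex

open Polynomial in
theorem Matrix.charpoly_fin_four_companion_coupled {R : Type*} [CommRing R] (p q r s u v w : R) :
    (!![p, 0, q, 0; r, s, 0, 0; 0, 0, 0, 1; 0, u, v, w] : Matrix (Fin 4) (Fin 4) R).charpoly
      = (X - C p) * (X - C s) * (X ^ 2 - C w * X - C v) - C (q * r * u) := by
  rw [Matrix.charpoly, Matrix.det_succ_row_zero]
  simp [Fin.sum_univ_succ, Matrix.det_succ_row_zero, Matrix.charmatrix_apply, Fin.succAbove,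
    Matrix.submatrix]
  ring

open Polynomial in
theorem Matrix.isRoot_charpoly_map_ofReal_fin_four_companion_coupled
    (p q r s u v w : ℝ) (z : ℂ) :
    ((!![p, 0, q, 0; r, s, 0, 0; 0, 0, 0, 1; 0, u, v, w] : Matrix (Fin 4) (Fin 4) ℝ).map
        ofReal).charpoly.IsRoot z ↔
      (z - p) * (z - s) * (z ^ 2 - w * z - v) - q * r * u = 0 := by
  rw [show ofReal = ofRealHom from rfl, Matrix.charpoly_map, IsRoot.def, eval_map,
    Matrix.charpoly_fin_four_companion_coupled]
  simp

section Quartic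

variable {d r C D K E : ℝ}

theorem exists_one_lt_root_quartic (hd : 0 ≤ d) (hr : 0 ≤ r) (hD : 0 ≤ D) (hC : 1 + D + K < C)
    (hE : 0 < E) (hEK : E ≤ d * r * K) :
    ∃ t : ℝ, 1 < t ∧ (t + d) * (t + r) * (t ^ 2 - C * t - D) + E = 0 := by
  set f : ℝ → ℝ := fun t ↦ (t + d) * (t + r) * (t ^ 2 - C * t - D) + E
  have hK : 0 ≤ K := by nlinarith [mul_nonneg hd hr]
  have hf1 : f 1 < 0 := by
    have : d * r * K ≤ (1 + d) * (1 + r) * K := by gcongr <;> linarith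
    simp only [f]
    nlinarith
  have hfC : 0 < f (C + 1) := by
    simp only [f]
    nlinarith [mul_pos (by linarith : 0 < C + 1 + d) (by linarith : 0 < C + 1 + r)]
  obtain ⟨t, ht, hft⟩ := intermediate_value_Ioo (by linarith : (1 : ℝ) ≤ C + 1)
    (by fun_prop : ContinuousOn f _) ⟨hf1, hfC⟩
  exact ⟨t, ht.1, hft⟩

theorem lt_two_mul_re_of_root_quartic {z : ℂ} (hd : 0 ≤ d) (hr : 0 ≤ r) (hE : 0 < E)
    (hz : (z + d) * (z + r) * (z ^ 2 - C * z - D) + E = 0) (hx : 0 < z.re) (hy : z.im ≠ 0) :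
    C < 2 * z.re := by
  set q := z ^ 2 - C * z - D
  have hq : q ≠ 0 := by
    rintro hq
    rw [hq, mul_zero, zero_add] at hz
    exact hE.ne' (by exact_mod_cast hz)
  have key : ((z + d) * (z + r)).im * normSq q = E * q.im := by
    have h := congrArg (fun w ↦ (w * (starRingEnd ℂ) q).im) (eq_neg_of_add_eq_zero_left hz)
    rwa [mul_assoc _ q, mul_conj, im_mul_ofReal, neg_mul, neg_im, im_ofReal_mul, conj_im,
      mul_neg, neg_neg] at h
  have hIm : ((z + d) * (z + r)).im = z.im * (2 * z.re + d + r) := by simp; ring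
  have hImq : q.im = z.im * (2 * z.re - C) := by simp [q, pow_two]; ring
  rw [hIm, hImq, mul_assoc, mul_left_comm E, mul_right_inj' hy] at key
  have : 0 < (2 * z.re + d + r) * normSq q := mul_pos (by linarith) (normSq_pos.2 hq)
  nlinarith

theorem im_eq_zero_of_root_quartic {z : ℂ} (hd : 0 ≤ d) (hr : 0 ≤ r) (hD : 0 ≤ D)
    (hC : 1 + D + K < C) (hE : 0 < E) (hEK : E ≤ d * r * K)
    (hz : (z + d) * (z + r) * (z ^ 2 - C * z - D) + E = 0) (hx : 0 < z.re) (hx1 : z.re ≤ 1) :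
    z.im = 0 := by
  by_contra hy
  have hCx := lt_two_mul_re_of_root_quartic hd hr hE hz hx hy
  have hK : 0 ≤ K := by nlinarith [mul_nonneg hd hr]
  have hq : K < ‖z ^ 2 - C * z - D‖ := by
    have hre : -(z ^ 2 - C * z - D).re = z.im ^ 2 + D + z.re * (C - z.re) := by
      simp [pow_two]; ring
    -- `x (C - x) ≥ C - 1` because `C - 1 < C / 2 < x ≤ 1`
    have hmin : 0 ≤ (1 - z.re) * (z.re - (C - 1)) :=
      mul_nonneg (by linarith) (by linarith)
    have := (neg_le_abs _).trans (abs_re_le_norm (z ^ 2 - C * z - D))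
    nlinarith [sq_nonneg z.im]
  have hzd : d < ‖z + d‖ := by
    have := re_le_norm (z + d)
    simp only [add_re, ofReal_re] at this
    linarith
  have hzr : r < ‖z + r‖ := by
    have := re_le_norm (z + r)
    simp only [add_re, ofReal_re] at this
    linarith
  have hnorm : ‖(z + d) * (z + r) * (z ^ 2 - C * z - D)‖ = E := by
    rw [eq_neg_of_add_eq_zero_left hz, norm_neg, norm_real, Real.norm_of_nonneg hE.le]
  rw [norm_mul, norm_mul] at hnorm
  have : d * r * K < ‖z + d‖ * ‖z + r‖ * ‖z ^ 2 - C * z - D‖ := by gcongr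
  linarith

theorem one_lt_re_or_of_root_quartic {z : ℂ} (hd : 0 ≤ d) (hr : 0 ≤ r) (hD : 0 ≤ D)
    (hC : 1 + D + K < C) (hE : 0 < E) (hEK : E ≤ d * r * K)
    (hz : (z + d) * (z + r) * (z ^ 2 - C * z - D) + E = 0) (hx : 0 < z.re) :
    1 < z.re ∨ (z.im = 0 ∧ ‖z‖ ≤ 1) := by
  refine or_iff_not_imp_left.2 fun hx1 ↦ ?_
  have him := im_eq_zero_of_root_quartic hd hr hD hC hE hEK hz hx (not_lt.1 hx1)
  refine ⟨him, ?_⟩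
  rw [← abs_re_eq_norm.2 him, abs_of_pos hx]
  exact not_lt.1 hx1

end Quartic

theorem positive_real_eigenvalue_exists (a k lam α β μ δ δv Dv c Rs : ℝ)
    (ha : 0 < a) (hk : 0 < k) (hlam : 0 < lam) (hα : 0 < α) (hβ : 0 < β)
    (hμ : 0 < μ) (hδ : 0 < δ) (hδv : 0 < δv) (hDv : 0 < Dv) (hc : 0 < c)
    (hRs : 0 < Rs)
    (h1 : δ > (1 + c) * μ) (h2 : Rs - a > c * μ)
    (h3 : c > Dv + δv / μ + k * α * β * lam / μ) :
    let A : Matrix (Fin 4) (Fin 4) ℝ :=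
      !![-δ / (c * μ), 0, 1 / c, 0;
         a / (c * μ), -Rs / (c * μ), 0, 0;
         0, 0, 0, 1;
         0, -(k * α * β * lam) / (μ * Dv), δv / (μ * Dv), c / Dv]
    (∃ t : ℝ, 1 < t ∧ (A.map Complex.ofReal).charpoly.IsRoot (t : ℂ)) ∧
    (∀ z : ℂ, (A.map Complex.ofReal).charpoly.IsRoot z → 0 < z.re →
      (1 < z.re ∨ (z.im = 0 ∧ ‖z‖ ≤ 1))) := by
  intro A
  set K := k * α * β * lam / (μ * Dv) with hK
  set E := 1 / c * (a / (c * μ)) * K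
  have hroot (z : ℂ) : (A.map ofReal).charpoly.IsRoot z ↔ (z + ↑(δ / (c * μ))) *
      (z + ↑(Rs / (c * μ))) * (z ^ 2 - ↑(c / Dv) * z - ↑(δv / (μ * Dv))) + E = 0 := by
    rw [Matrix.isRoot_charpoly_map_ofReal_fin_four_companion_coupled]
    push_cast [E, K]
    ring_nf
  have hC : 1 + δv / (μ * Dv) + K < c / Dv := by
    rw [lt_div_iff₀ hDv]
    calc (1 + δv / (μ * Dv) + K) * Dv = Dv + δv / μ + k * α * β * lam / μ := by
          rw [hK]; field_simp
      _ < c := h3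
  have hEK : E ≤ δ / (c * μ) * (Rs / (c * μ)) * K := by
    refine mul_le_mul_of_nonneg_right ?_ (by positivity)
    rw [div_mul_div_comm, div_mul_div_comm, div_le_div_iff₀ (by positivity) (by positivity)]
    have hμδ : μ < δ := by nlinarith [mul_pos hc hμ]
    have haRs : a < Rs := by nlinarith [mul_pos hc hμ]
    have := mul_lt_mul_of_pos_right (mul_lt_mul'' haRs hμδ ha.le hμ.le)
      (by positivity : 0 < c * c * μ)
    linarith
  have hE : 0 < E := by positivity
  refine ⟨?_, fun z hz hx ↦ one_lt_re_or_of_root_quartic (by positivity) (by positivity)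
    (by positivity) hC hE hEK ((hroot z).1 hz) hx⟩
  obtain ⟨t, ht, hft⟩ := exists_one_lt_root_quartic (by positivity) (by positivity)
    (by positivity) hC hE hEK
  exact ⟨t, ht, (hroot t).2 (by exact_mod_cast hft)⟩
end
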